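/- arXiv:2502.10644 — 5 statements merged into one kernel-verified Lean document; each statement's English description precedes it below -/
import Mathlib

section
/- Let 1 ≤ p ≤ ∞ and let S : ℓ^p(ℕ) → ℓ^p(ℕ) be the left shift operator, S(x⁽⁰⁾, x⁽¹⁾, x⁽²⁾, …) = (x⁽¹⁾, x⁽²⁾, …). For every initial datum a ∈ ℓ^p(ℕ) there exist T > 0 and a continuously differentiable curve x : [0,T] → ℓ^p(ℕ) with x(0) = a and x'(t) = (x(t))⁽⁰⁾ · S(x(t)) for all t ∈ [0,T]; moreover, any two continuously differentiable solutions of this initial value problem defined on a common interval [0,T'] with 0 < T' ≤ T coincide on [0,T']. -/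
/-!
The left shift is a linear operator of norm at most one on `ℓ^p`, and `x ↦ x⁽⁰⁾` is a bounded
linear functional, so the vector field `x ↦ x⁽⁰⁾ · S x` is smooth. A `C¹` vector field on a Banach
space is locally Lipschitz: Picard–Lindelöf gives a local solution, and Grönwall gives uniqueness,
using a Lipschitz constant on the compact set traced out by the two solutions.
-/

open Set Function
open scoped ENNReal NNReal

theorem Memℓp.comp_injective {α β : Type*} {E : α → Type*} [∀ i, NormedAddCommGroup (E i)]
    {p : ℝ≥0∞} {f : ∀ i, E i} (hf : Memℓp f p) {e : β → α} (he : Injective e) :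
    Memℓp (fun b => f (e b)) p := by
  rcases p.trichotomy with rfl | rfl | hp
  · exact memℓp_zero (hf.finite_dsupport.preimage he.injOn)
  · obtain ⟨C, hC⟩ := hf.bddAbove
    exact memℓp_infty ⟨C, by rintro - ⟨b, rfl⟩; exact hC ⟨e b, rfl⟩⟩
  · exact memℓp_gen ((hf.summable hp).comp_injective he)

namespace lp

variable (𝕜 E : Type*) [NormedField 𝕜] [NormedAddCommGroup E] [NormedSpace 𝕜 E]
  (p : ℝ≥0∞)

def shiftₗ : lp (fun _ : ℕ => E) p →ₗ[𝕜] lp (fun _ : ℕ => E) p where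
  toFun x := ⟨fun n => x (n + 1), (lp.memℓp x).comp_injective (add_left_injective 1)⟩
  map_add' _ _ := rfl
  map_smul' _ _ := rfl

theorem norm_shiftₗ_le [Fact (1 ≤ p)] (x : lp (fun _ : ℕ => E) p) : ‖shiftₗ 𝕜 E p x‖ ≤ ‖x‖ := by
  rcases p.dichotomy with rfl | hp
  · exact norm_le_of_forall_le (norm_nonneg x) fun n => norm_apply_le_norm ENNReal.top_ne_zero x _
  · have hp : 0 < p.toReal := zero_lt_one.trans_le hp
    refine norm_le_of_tsum_le hp (norm_nonneg x) ?_
    rw [norm_rpow_eq_tsum hp x]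
    exact ((lp.memℓp _).summable hp).tsum_le_tsum_of_inj (· + 1) (add_left_injective 1)
      (fun _ _ => by positivity) (fun _ => le_rfl) ((lp.memℓp x).summable hp)

noncomputable def shiftCLM [Fact (1 ≤ p)] : lp (fun _ : ℕ => E) p →L[𝕜] lp (fun _ : ℕ => E) p :=
  (shiftₗ 𝕜 E p).mkContinuous 1 fun x => by simpa using norm_shiftₗ_le 𝕜 E p x

end lp

section AutonomousODE

variable {E : Type*} [NormedAddCommGroup E] [NormedSpace ℝ E] {v : E → E}

theorem exists_hasDerivWithinAt_Icc_of_contDiffAt [CompleteSpace E] {x₀ : E}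
    (hv : ContDiffAt ℝ 1 v x₀) :
    ∃ T > 0, ∃ α : ℝ → E, α 0 = x₀ ∧
      ∀ t ∈ Icc 0 T, HasDerivWithinAt α (v (α t)) (Icc 0 T) t := by
  obtain ⟨α, hα₀, ε, hε, hα⟩ :=
    hv.exists_forall_mem_closedBall_exists_eq_forall_mem_Ioo_hasDerivAt₀ 0
  refine ⟨ε / 2, half_pos hε, α, hα₀, fun t ht => (hα t ⟨?_, ?_⟩).hasDerivWithinAt⟩ <;>
    linarith [ht.1, ht.2]

theorem contDiffOn_Icc_of_hasDerivWithinAt [CompleteSpace E] (hv : ContDiff ℝ 1 v)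
    {α : ℝ → E} {a b : ℝ}
    (hα : ∀ t ∈ Icc a b, HasDerivWithinAt α (v (α t)) (Icc a b) t) :
    ContDiffOn ℝ 1 α (Icc a b) :=
  ODE.contDiffOn_enat_Icc_of_hasDerivWithinAt (f := fun _ => v) (n := 1) (u := univ)
    (hv.comp contDiff_snd).contDiffOn hα (mapsTo_univ _ _)

theorem eqOn_Icc_of_hasDerivWithinAt (hv : ContDiff ℝ 1 v) {f g : ℝ → E} {a b : ℝ}
    (hf : ∀ t ∈ Icc a b, HasDerivWithinAt f (v (f t)) (Icc a b) t)
    (hg : ∀ t ∈ Icc a b, HasDerivWithinAt g (v (g t)) (Icc a b) t)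
    (ha : f a = g a) : EqOn f g (Icc a b) := by
  have hf_cont : ContinuousOn f (Icc a b) := HasDerivWithinAt.continuousOn hf
  have hg_cont : ContinuousOn g (Icc a b) := HasDerivWithinAt.continuousOn hg
  set K := f '' Icc a b ∪ g '' Icc a b
  have hK : IsCompact K :=
    (isCompact_Icc.image_of_continuousOn hf_cont).union
      (isCompact_Icc.image_of_continuousOn hg_cont)
  obtain ⟨L, hL⟩ :=
    (hv.locallyLipschitz.locallyLipschitzOn (s := K)).exists_lipschitzOnWith_of_compact hK
  have right_deriv {h : ℝ → E} (hh : ∀ t ∈ Icc a b, HasDerivWithinAt h (v (h t)) (Icc a b) t)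
      (t : ℝ) (ht : t ∈ Ico a b) : HasDerivWithinAt h (v (h t)) (Ici t) t :=
    (hh t (Ico_subset_Icc_self ht)).mono_of_mem_nhdsWithin (Icc_mem_nhdsGE_of_mem ht)
  exact ODE_solution_unique_of_mem_Icc_right (v := fun _ => v) (s := fun _ => K)
    (fun _ _ => hL) hf_cont (right_deriv hf)
    (fun t ht => Or.inl (mem_image_of_mem f (Ico_subset_Icc_self ht))) hg_cont (right_deriv hg)
    (fun t ht => Or.inr (mem_image_of_mem g (Ico_subset_Icc_self ht))) ha

end AutonomousODE

section GradientHierarchy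

variable (p : ℝ≥0∞) [Fact (1 ≤ p)]

noncomputable def gradientHierarchyField (x : lp (fun _ : ℕ => ℝ) p) : lp (fun _ : ℕ => ℝ) p :=
  x 0 • lp.shiftCLM ℝ ℝ p x

theorem contDiff_gradientHierarchyField {n : WithTop ℕ∞} :
    ContDiff ℝ n (gradientHierarchyField p) :=
  (lp.evalCLM ℝ (fun _ : ℕ => ℝ) p 0).contDiff.smul (lp.shiftCLM ℝ ℝ p).contDiff

variable {p} in
theorem eq_gradientHierarchyField_iff {x d : lp (fun _ : ℕ => ℝ) p} :
    d = gradientHierarchyField p x ↔ ∀ n, d n = x 0 * x (n + 1) :=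
  ⟨fun h _ => h ▸ rfl, fun h => lp.ext (funext h)⟩

end GradientHierarchy

/-- Local existence and uniqueness for the infinite-dimensional ODE
`x' = x⁽⁰⁾ · S(x)` in `ℓ^p(ℕ)`, where `S` is the left shift operator. -/
theorem stmt_1 (p : ENNReal) [Fact (1 ≤ p)] (a : lp (fun _ : ℕ => ℝ) p) :
    ∃ T : ℝ, 0 < T ∧
      (∃ x : ℝ → lp (fun _ : ℕ => ℝ) p,
        ContDiffOn ℝ 1 x (Set.Icc 0 T) ∧ x 0 = a ∧
        ∀ t ∈ Set.Icc (0:ℝ) T, ∃ dx : lp (fun _ : ℕ => ℝ) p,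
          HasDerivWithinAt x dx (Set.Icc 0 T) t ∧
          ∀ n : ℕ, dx n = x t 0 * x t (n + 1)) ∧
      (∀ T' : ℝ, 0 < T' → T' ≤ T →
        ∀ y z : ℝ → lp (fun _ : ℕ => ℝ) p,
          (ContDiffOn ℝ 1 y (Set.Icc 0 T') ∧ y 0 = a ∧
            ∀ t ∈ Set.Icc (0:ℝ) T', ∃ dy : lp (fun _ : ℕ => ℝ) p,
              HasDerivWithinAt y dy (Set.Icc 0 T') t ∧
              ∀ n : ℕ, dy n = y t 0 * y t (n + 1)) →
          (ContDiffOn ℝ 1 z (Set.Icc 0 T') ∧ z 0 = a ∧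
            ∀ t ∈ Set.Icc (0:ℝ) T', ∃ dz : lp (fun _ : ℕ => ℝ) p,
              HasDerivWithinAt z dz (Set.Icc 0 T') t ∧
              ∀ n : ℕ, dz n = z t 0 * z t (n + 1)) →
          ∀ t ∈ Set.Icc (0:ℝ) T', y t = z t) := by
  have hv : ContDiff ℝ 1 (gradientHierarchyField p) := contDiff_gradientHierarchyField p
  have solves {y : ℝ → lp (fun _ : ℕ => ℝ) p} {s : Set ℝ}
      (hy : ∀ t ∈ s, ∃ dy : lp (fun _ : ℕ => ℝ) p,
        HasDerivWithinAt y dy s t ∧ ∀ n : ℕ, dy n = y t 0 * y t (n + 1)) (t : ℝ) (ht : t ∈ s) :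
      HasDerivWithinAt y (gradientHierarchyField p (y t)) s t := by
    obtain ⟨dy, hdy, hdy_apply⟩ := hy t ht
    rwa [← eq_gradientHierarchyField_iff.mpr hdy_apply]
  obtain ⟨T, hT, x, hx₀, hx⟩ := exists_hasDerivWithinAt_Icc_of_contDiffAt (x₀ := a) hv.contDiffAt
  refine ⟨T, hT, ⟨x, contDiffOn_Icc_of_hasDerivWithinAt hv hx, hx₀, fun t ht =>
    ⟨_, hx t ht, eq_gradientHierarchyField_iff.mp rfl⟩⟩, ?_⟩
  rintro T' - - y z ⟨-, hy₀, hy⟩ ⟨-, hz₀, hz⟩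
  exact eqOn_Icc_of_hasDerivWithinAt hv (solves hy) (solves hz) (hy₀.trans hz₀.symm)
end

section
/- Let 0 < T < 1, q ≥ 1, and i ∈ {1,2}. Then there exist λ > 0 and a probability density function ρ : [0,∞) → [0,∞) such that: (a) ∫_r^∞ ρ(s) ds ≥ e^{−λr} for all r ≥ 0; and (b) inf_{s ∈ [0,T]} ρ(s) > 1 / C_i(q;T), where C_i(q;T) is computed with this λ. -/
/-!
Take `ρ` constant on `[0, T]` and equal to the exponential density `λ e^{-λr}` beyond `T`, the
plateau height `(1 - e^{-λT}) / T` making the total mass one. The tail of `ρ` is `e^{-λr}` for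
`r ≥ T` and affine on `[0, T]`, where it dominates the convex function `e^{-λr}` because the two
agree at `0` and `T`. Both `1 / C_i` are at most `2 / (2 - e^{-λT})`, and the choice
`e^{-λT} = (1 - T) / 2` puts this below the plateau height, as `(1 - T)(3 - T) > 0`.
-/

/-- `C_i(q;T)`, `i ∈ {1,2}`, from the paper: `C₁(q;T) := (1 − e^{−2λT})^{−1/(2q)}` and
`C₂(q;T) := (√(4 + e^{−2λT}) − e^{−λT})^{1/q} / (2^{1/q} (1 − e^{−λT})^{1/(2q)})`. -/
noncomputable def Ci (i : Fin 2) (lam q T : ℝ) : ℝ :=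
  if i = 0 then (1 - Real.exp (-(2 * lam * T))) ^ (-(1 / (2 * q)))
  else (Real.sqrt (4 + Real.exp (-(2 * lam * T))) - Real.exp (-(lam * T))) ^ (1 / q)
    / ((2:ℝ) ^ (1 / q) * (1 - Real.exp (-(lam * T))) ^ (1 / (2 * q)))

open MeasureTheory Set Real

lemma integral_Ioi_mul_exp_neg_mul {lam : ℝ} (hlam : 0 < lam) (a : ℝ) :
    ∫ r in Ioi a, lam * exp (-(lam * r)) = exp (-(lam * a)) := by
  simp_rw [← neg_mul]
  rw [integral_const_mul, integral_exp_mul_Ioi (neg_neg_of_pos hlam)]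
  field_simp

lemma integrableOn_mul_exp_neg_mul {lam : ℝ} (hlam : 0 < lam) (a : ℝ) :
    IntegrableOn (fun r => lam * exp (-(lam * r))) (Ioi a) := by
  have h := (exp_neg_integrableOn_Ioi a hlam).const_mul lam
  simp only [neg_mul] at h
  exact h

lemma exp_neg_mul_le_one_sub_div_mul {lam T r : ℝ} (hT : 0 < T) (hr : 0 ≤ r) (hrT : r ≤ T) :
    exp (-(lam * r)) ≤ 1 - r / T * (1 - exp (-(lam * T))) := by
  have hw : 0 ≤ r / T := div_nonneg hr hT.le
  have hw' : 0 ≤ 1 - r / T := sub_nonneg.2 ((div_le_one hT).2 hrT)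
  have h := convexOn_exp.2 (mem_univ 0) (mem_univ (-(lam * T))) hw' hw (by ring)
  simp only [smul_eq_mul, mul_zero, zero_add, exp_zero, mul_one] at h
  calc exp (-(lam * r)) = exp (r / T * -(lam * T)) := by field_simp
    _ ≤ 1 - r / T + r / T * exp (-(lam * T)) := h
    _ = 1 - r / T * (1 - exp (-(lam * T))) := by ring

noncomputable def plateauExpDensity (lam T : ℝ) (r : ℝ) : ℝ :=
  if r ≤ T then (1 - exp (-(lam * T))) / T else lam * exp (-(lam * r))

namespace plateauExpDensity

variable {lam T : ℝ}

lemma measurable : Measurable (plateauExpDensity lam T) :=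
  Measurable.ite measurableSet_Iic measurable_const (by fun_prop)

lemma nonneg (hlam : 0 ≤ lam) (hT : 0 ≤ T) (r : ℝ) : 0 ≤ plateauExpDensity lam T r := by
  unfold plateauExpDensity
  split_ifs
  · have : exp (-(lam * T)) ≤ 1 := exp_le_one_iff.2 (by nlinarith)
    exact div_nonneg (by linarith) hT
  · positivity

lemma eqOn_Ioi : EqOn (plateauExpDensity lam T) (fun r => lam * exp (-(lam * r))) (Ioi T) :=
  fun _ hr => if_neg (not_le.2 hr)

lemma eqOn_Iic : EqOn (plateauExpDensity lam T) (fun _ => (1 - exp (-(lam * T))) / T) (Iic T) :=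
  fun _ hr => if_pos hr

lemma integral_Ioi_of_ge (hlam : 0 < lam) {a : ℝ} (ha : T ≤ a) :
    ∫ r in Ioi a, plateauExpDensity lam T r = exp (-(lam * a)) := by
  rw [setIntegral_congr_fun measurableSet_Ioi (eqOn_Ioi.mono (Ioi_subset_Ioi ha)),
    integral_Ioi_mul_exp_neg_mul hlam]

lemma integrableOn_Ioi (hlam : 0 < lam) (a : ℝ) :
    IntegrableOn (plateauExpDensity lam T) (Ioi a) := by
  refine IntegrableOn.mono_set ?_ (Ioi_subset_Ioc_union_Ioi (b := T))
  refine IntegrableOn.union ?_ ?_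
  · exact (integrableOn_const measure_Ioc_lt_top.ne).congr_fun
      (eqOn_Iic.mono Ioc_subset_Iic_self).symm measurableSet_Ioc
  · exact (integrableOn_mul_exp_neg_mul hlam T).congr_fun eqOn_Ioi.symm measurableSet_Ioi

lemma integral_Ioi_of_le (hlam : 0 < lam) (hT : 0 < T) {a : ℝ} (ha : a ≤ T) :
    ∫ r in Ioi a, plateauExpDensity lam T r = 1 - a / T * (1 - exp (-(lam * T))) := by
  rw [← Ioc_union_Ioi_eq_Ioi ha, setIntegral_union (Ioc_disjoint_Ioi le_rfl) measurableSet_Ioi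
    ((integrableOn_Ioi hlam a).mono_set Ioc_subset_Ioi_self) (integrableOn_Ioi hlam T),
    setIntegral_congr_fun measurableSet_Ioc (eqOn_Iic.mono Ioc_subset_Iic_self),
    integral_Ioi_of_ge hlam le_rfl, setIntegral_const, Real.volume_real_Ioc_of_le ha, smul_eq_mul]
  field_simp
  ring

lemma exp_neg_mul_le_integral_Ioi (hlam : 0 < lam) (hT : 0 < T) {r : ℝ} (hr : 0 ≤ r) :
    exp (-(lam * r)) ≤ ∫ s in Ioi r, plateauExpDensity lam T s := by
  rcases le_total r T with hrT | hTr
  · rw [integral_Ioi_of_le hlam hT hrT]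
    exact exp_neg_mul_le_one_sub_div_mul hT hr hrT
  · rw [integral_Ioi_of_ge hlam hTr]

lemma image_Icc (hT : 0 ≤ T) :
    plateauExpDensity lam T '' Icc 0 T = {(1 - exp (-(lam * T))) / T} :=
  (eqOn_Iic.mono Icc_subset_Iic_self).image_eq.trans ((nonempty_Icc.2 hT).image_const _)

end plateauExpDensity

lemma one_div_Ci_zero_le_one {lam q T : ℝ} (hlamT : 0 ≤ lam * T) (hq : 0 ≤ q) :
    1 / Ci 0 lam q T ≤ 1 := by
  have hx : exp (-(2 * lam * T)) ≤ 1 := exp_le_one_iff.2 (by nlinarith)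
  rw [Ci, if_pos rfl, one_div, ← rpow_neg (sub_nonneg.2 hx), neg_neg]
  exact rpow_le_one (sub_nonneg.2 hx) (by linarith [exp_pos (-(2 * lam * T))]) (by positivity)

lemma one_div_Ci_one_le {lam q T : ℝ} (hlamT : 0 ≤ lam * T) (hq : 1 ≤ q) :
    1 / Ci 1 lam q T ≤ 2 / (2 - exp (-(lam * T))) := by
  set x := exp (-(lam * T))
  have hx0 : 0 < x := exp_pos _
  have hx1 : x ≤ 1 := exp_le_one_iff.2 (by linarith)
  have hx2 : exp (-(2 * lam * T)) = x ^ 2 := by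
    rw [← exp_nat_mul]; congr 1; ring
  have h2x : 0 < 2 - x := by linarith
  have hsqrt : 2 - x ≤ sqrt (4 + x ^ 2) - x := by
    have : sqrt 4 = 2 := by rw [show (4:ℝ) = 2 ^ 2 by norm_num, sqrt_sq zero_le_two]
    linarith [this ▸ sqrt_le_sqrt (le_add_of_nonneg_right (sq_nonneg x))]
  have hbase : 1 ≤ 2 / (2 - x) := (one_le_div h2x).2 (by linarith)
  rw [Ci, if_neg one_ne_zero, hx2, one_div_div]
  calc 2 ^ (1 / q) * (1 - x) ^ (1 / (2 * q)) / (sqrt (4 + x ^ 2) - x) ^ (1 / q)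
      ≤ 2 ^ (1 / q) * 1 / (2 - x) ^ (1 / q) := by
        gcongr
        exact rpow_le_one (by linarith) (by linarith) (by positivity)
    _ = (2 / (2 - x)) ^ (1 / q) := by rw [mul_one, div_rpow zero_le_two h2x.le]
    _ ≤ (2 / (2 - x)) ^ (1 : ℝ) :=
        rpow_le_rpow_of_exponent_le hbase ((div_le_one (by linarith)).2 hq)
    _ = 2 / (2 - x) := rpow_one _

lemma one_div_Ci_le (i : Fin 2) {lam q T : ℝ} (hlamT : 0 ≤ lam * T) (hq : 1 ≤ q) :
    1 / Ci i lam q T ≤ 2 / (2 - exp (-(lam * T))) := by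
  fin_cases i
  · have hx : exp (-(lam * T)) ≤ 1 := exp_le_one_iff.2 (by linarith)
    exact (one_div_Ci_zero_le_one hlamT (by linarith)).trans
      ((one_le_div (by linarith)).2 (by linarith [exp_pos (-(lam * T))]))
  · exact one_div_Ci_one_le hlamT hq

/-- For `0 < T < 1`, `q ≥ 1` and `i ∈ {1,2}` there exist `λ > 0` and a
probability density `ρ` on `[0,∞)` whose tail dominates `e^{−λr}` and with
`inf_{[0,T]} ρ > 1 / C_i(q;T)`. -/
theorem stmt_6 (T q : ℝ) (hT : 0 < T) (hT1 : T < 1) (hq : 1 ≤ q) (i : Fin 2) :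
    ∃ lam > (0:ℝ), ∃ ρ : ℝ → ℝ, Measurable ρ ∧ (∀ r, 0 ≤ r → 0 ≤ ρ r) ∧
      MeasureTheory.IntegrableOn ρ (Set.Ioi 0) ∧
      (∫ r in Set.Ioi (0:ℝ), ρ r) = 1 ∧
      (∀ r : ℝ, 0 ≤ r → Real.exp (-(lam * r)) ≤ ∫ s in Set.Ioi r, ρ s) ∧
      1 / Ci i lam q T < sInf (ρ '' Set.Icc 0 T) := by
  set lam := log (2 / (1 - T)) / T
  have hlamT : lam * T = log (2 / (1 - T)) := div_mul_cancel₀ _ hT.ne'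
  have hlam : 0 < lam := div_pos (log_pos ((one_lt_div (by linarith)).2 (by linarith))) hT
  have hx : exp (-(lam * T)) = (1 - T) / 2 := by
    rw [hlamT, exp_neg, exp_log (div_pos two_pos (by linarith)), inv_div]
  refine ⟨lam, hlam, plateauExpDensity lam T, plateauExpDensity.measurable,
    fun r _ => plateauExpDensity.nonneg hlam.le hT.le r, plateauExpDensity.integrableOn_Ioi hlam 0,
    by simpa using plateauExpDensity.integral_Ioi_of_le hlam hT hT.le,
    fun r hr => plateauExpDensity.exp_neg_mul_le_integral_Ioi hlam hT hr, ?_⟩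
  rw [plateauExpDensity.image_Icc hT.le, csInf_singleton]
  refine (one_div_Ci_le i (mul_pos hlam hT).le hq).trans_lt ?_
  rw [hx, div_lt_div_iff₀ (by linarith) hT]
  nlinarith
end

section
/- Let λ, T₀, λ₁, λ₂ > 0, C' > 0, and define ρ : [0,∞) → ℝ by ρ(t) := 1/C' for 0 ≤ t ≤ T₀ and ρ(t) := λ₂ e^{−λ₁ t} for t > T₀. Then the following are equivalent: (I) ρ is a probability density (∫₀^∞ ρ(r) dr = 1) and F̄_ρ(r) ≥ e^{−λr} for all r ≥ 0; (II) the three conditions hold: T₀/C' + (λ₂/λ₁) e^{−λ₁ T₀} = 1, λ₁ ≤ λ, and T₀ ≤ (1 − e^{−λT₀}) C'. -/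
/-!
Once `ρ` is normalised, its tail is `F̄(r) = 1 - r / C'` on `[0, T₀]` and `F̄(T₀) e^{-λ₁ (r - T₀)}`
beyond `T₀`. On `[0, T₀]` the bound `e^{-λr} ≤ F̄(r)` compares a convex function with an affine
one that agrees with it at `0`, so it holds iff it holds at `T₀`, i.e. `T₀ ≤ (1 - e^{-λT₀}) C'`.
Beyond `T₀` it then holds iff `λ₁ ≤ λ`: otherwise `e^{(λ₁ - λ) r} ≤ λ₂ / λ₁` would fail for
large `r`.
-/

open Real MeasureTheory Set Filter

noncomputable section

def lifetimeDensity (T₀ C' lam₁ lam₂ s : ℝ) : ℝ :=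
  if s ≤ T₀ then 1 / C' else lam₂ * exp (-(lam₁ * s))

def lifetimeTail (T₀ C' lam₁ lam₂ r : ℝ) : ℝ :=
  ∫ s in Ioi r, lifetimeDensity T₀ C' lam₁ lam₂ s

end

lemma eqOn_lifetimeDensity_Ioi (T₀ C' lam₁ lam₂ : ℝ) :
    EqOn (lifetimeDensity T₀ C' lam₁ lam₂) (fun s => lam₂ * exp (-lam₁ * s)) (Ioi T₀) :=
  fun s hs => by simp [lifetimeDensity, not_le.2 (mem_Ioi.1 hs)]

section Tail

variable {T₀ C' lam₁ lam₂ r : ℝ}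

lemma lifetimeTail_of_le (h₁ : 0 < lam₁) (hr : T₀ ≤ r) :
    lifetimeTail T₀ C' lam₁ lam₂ r = lam₂ / lam₁ * exp (-(lam₁ * r)) := by
  rw [lifetimeTail, setIntegral_congr_fun measurableSet_Ioi
      ((eqOn_lifetimeDensity_Ioi T₀ C' lam₁ lam₂).mono (Ioi_subset_Ioi hr)),
    integral_const_mul, integral_exp_mul_Ioi (neg_neg_of_pos h₁), neg_div_neg_eq, neg_mul]
  ring

lemma lifetimeTail_of_ge (h₁ : 0 < lam₁) (hr : r ≤ T₀) :
    lifetimeTail T₀ C' lam₁ lam₂ r = (T₀ - r) / C' + lifetimeTail T₀ C' lam₁ lam₂ T₀ := by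
  have hIoc : EqOn (lifetimeDensity T₀ C' lam₁ lam₂) (fun _ => 1 / C') (Ioc r T₀) :=
    fun s hs => if_pos hs.2
  have hIoi := eqOn_lifetimeDensity_Ioi T₀ C' lam₁ lam₂
  rw [lifetimeTail, ← Ioc_union_Ioi_eq_Ioi hr,
    setIntegral_union (Ioc_disjoint_Ioi le_rfl) measurableSet_Ioi
      ((integrableOn_const measure_Ioc_lt_top.ne).congr_fun hIoc.symm measurableSet_Ioc)
      (IntegrableOn.congr_fun ((exp_neg_integrableOn_Ioi T₀ h₁).const_mul lam₂) hIoi.symm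
        measurableSet_Ioi),
    setIntegral_congr_fun measurableSet_Ioc hIoc, setIntegral_const, volume_real_Ioc_of_le hr,
    smul_eq_mul, lifetimeTail]
  ring

end Tail

lemma exp_mul_le_one_sub_add_mul_exp {t : ℝ} (ht₀ : 0 ≤ t) (ht₁ : t ≤ 1) (x : ℝ) :
    exp (t * x) ≤ 1 - t + t * exp x := by
  simpa using convexOn_exp.2 (mem_univ 0) (mem_univ x) (sub_nonneg.2 ht₁) ht₀ (by ring)

lemma exp_neg_mul_le_one_sub_div {lam T₀ C' r : ℝ} (hT₀ : 0 < T₀) (hC : 0 < C')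
    (hT₀C : T₀ ≤ (1 - exp (-(lam * T₀))) * C') (hr : 0 ≤ r) (hrT : r ≤ T₀) :
    exp (-(lam * r)) ≤ 1 - r / C' := by
  have hchord := exp_mul_le_one_sub_add_mul_exp (div_nonneg hr hT₀.le) ((div_le_one hT₀).2 hrT)
    (-(lam * T₀))
  rw [show r / T₀ * -(lam * T₀) = -(lam * r) by field_simp] at hchord
  have hslope : r / C' ≤ r / T₀ * (1 - exp (-(lam * T₀))) :=
    calc r / C' = r / T₀ * (T₀ / C') := by field_simp
      _ ≤ r / T₀ * (1 - exp (-(lam * T₀))) := by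
        gcongr
        exact (div_le_iff₀ hC).2 hT₀C
  linarith

lemma exp_neg_mul_le_mul_exp_neg_mul_of_le {lam lam₁ K T r : ℝ} (hlam₁ : lam₁ ≤ lam)
    (hT : exp (-(lam * T)) ≤ K * exp (-(lam₁ * T))) (hTr : T ≤ r) :
    exp (-(lam * r)) ≤ K * exp (-(lam₁ * r)) :=
  calc exp (-(lam * r)) = exp (-(lam * T)) * exp (-(lam * (r - T))) := by
        rw [← exp_add]; congr 1; ring
    _ ≤ K * exp (-(lam₁ * T)) * exp (-(lam₁ * (r - T))) :=
        mul_le_mul hT (exp_le_exp.2 (neg_le_neg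
          (mul_le_mul_of_nonneg_right hlam₁ (sub_nonneg.2 hTr)))) (exp_pos _).le
          ((exp_pos _).le.trans hT)
    _ = K * exp (-(lam₁ * r)) := by
        rw [mul_assoc, ← exp_add]; congr 2; ring

lemma le_of_eventually_exp_neg_mul_le {a b K : ℝ}
    (h : ∀ᶠ r in atTop, exp (-(a * r)) ≤ K * exp (-(b * r))) : b ≤ a := by
  by_contra! hab
  have hgrow : Tendsto (fun r => exp ((b - a) * r)) atTop atTop :=
    tendsto_exp_atTop.comp (tendsto_id.const_mul_atTop (sub_pos.2 hab))
  obtain ⟨r, hr, hKr⟩ := (h.and (hgrow.eventually_gt_atTop K)).exists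
  have : exp ((b - a) * r) * exp (-(b * r)) = exp (-(a * r)) := by
    rw [← exp_add]; congr 1; ring
  nlinarith [exp_pos (-(b * r))]

theorem stmt_7_general (lam T₀ lam₁ lam₂ C' : ℝ) (hT₀ : 0 < T₀)
    (h₁ : 0 < lam₁) (hC : 0 < C') :
    (((∫ r in Set.Ioi (0:ℝ),
        (if r ≤ T₀ then 1 / C' else lam₂ * Real.exp (-(lam₁ * r)))) = 1) ∧
      (∀ r : ℝ, 0 ≤ r → Real.exp (-(lam * r)) ≤
        ∫ s in Set.Ioi r, (if s ≤ T₀ then 1 / C' else lam₂ * Real.exp (-(lam₁ * s))))) ↔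
    (T₀ / C' + lam₂ / lam₁ * Real.exp (-(lam₁ * T₀)) = 1 ∧ lam₁ ≤ lam ∧
      T₀ ≤ (1 - Real.exp (-(lam * T₀))) * C') := by
  change (lifetimeTail T₀ C' lam₁ lam₂ 0 = 1 ∧
    ∀ r, 0 ≤ r → exp (-(lam * r)) ≤ lifetimeTail T₀ C' lam₁ lam₂ r) ↔ _
  have hF₀ := lifetimeTail_of_le (C' := C') (lam₂ := lam₂) h₁ (le_refl T₀)
  rw [lifetimeTail_of_ge h₁ hT₀.le, hF₀, sub_zero]
  refine and_congr_right fun hnorm => ⟨fun htail => ⟨?_, ?_⟩, fun ⟨hlam₁, hT₀C⟩ r hr => ?_⟩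
  · refine le_of_eventually_exp_neg_mul_le (K := lam₂ / lam₁) ?_
    filter_upwards [eventually_ge_atTop T₀] with r hr
    simpa only [lifetimeTail_of_le h₁ hr] using htail r (hT₀.le.trans hr)
  · have hT₀tail := htail T₀ hT₀.le
    rw [hF₀] at hT₀tail
    rw [← div_le_iff₀ hC]
    linarith
  · have hT₀bound : exp (-(lam * T₀)) ≤ lam₂ / lam₁ * exp (-(lam₁ * T₀)) := by
      rw [← div_le_iff₀ hC] at hT₀C
      linarith
    rcases le_total r T₀ with hrT | hTr
    · rw [lifetimeTail_of_ge h₁ hrT, hF₀, sub_div]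
      linarith [exp_neg_mul_le_one_sub_div hT₀ hC hT₀C hr hrT]
    · rw [lifetimeTail_of_le h₁ hTr]
      exact exp_neg_mul_le_mul_exp_neg_mul_of_le hlam₁ hT₀bound hTr

/-- For the piecewise lifetime density `ρ(t) = 1/C'` on `[0,T₀]`,
`ρ(t) = λ₂ e^{−λ₁ t}` for `t > T₀`, being a probability density whose tail dominates
`e^{−λr}` is equivalent to the three conditions
`T₀/C' + (λ₂/λ₁) e^{−λ₁T₀} = 1`, `λ₁ ≤ λ` and `T₀ ≤ (1 − e^{−λT₀}) C'`. -/
theorem stmt_7 (lam T₀ lam₁ lam₂ C' : ℝ) (hlam : 0 < lam) (hT₀ : 0 < T₀)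
    (h₁ : 0 < lam₁) (h₂ : 0 < lam₂) (hC : 0 < C') :
    (((∫ r in Set.Ioi (0:ℝ),
        (if r ≤ T₀ then 1 / C' else lam₂ * Real.exp (-(lam₁ * r)))) = 1) ∧
      (∀ r : ℝ, 0 ≤ r → Real.exp (-(lam * r)) ≤
        ∫ s in Set.Ioi r, (if s ≤ T₀ then 1 / C' else lam₂ * Real.exp (-(lam₁ * s))))) ↔
    (T₀ / C' + lam₂ / lam₁ * Real.exp (-(lam₁ * T₀)) = 1 ∧ lam₁ ≤ lam ∧
      T₀ ≤ (1 - Real.exp (-(lam * T₀))) * C') :=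
  stmt_7_general lam T₀ lam₁ lam₂ C' hT₀ h₁ hC
end

section
/- Let q ≥ 1 and for v > 0 define g₁(v) := v e^{−v} (1 − e^{−2v})^{−1/(2q)} and g₂(v) := v e^{−v} (√(4 + e^{−2v}) − e^{−v})^{1/q} / (2^{1/q} (1 − e^{−v})^{1/(2q)}). Then for each i ∈ {1,2}, the supremum sup_{v>0} g_i(v) lies in the open interval (1/e, 1/2). -/
set_option maxHeartbeats 1000000
open Real

private lemma cubic_le_exp {x : ℝ} (hx : 0 ≤ x) : 1 + x + x^2/2 + x^3/6 ≤ Real.exp x := by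
  have h := Real.sum_le_exp_of_nonneg hx 4
  simp [Finset.sum_range_succ, Nat.factorial] at h
  nlinarith [h]

private lemma key_exp {t : ℝ} (ht : 0 < t) : t^2 ≤ (9/10) * (Real.exp t - 1) := by
  have h := cubic_le_exp ht.le
  nlinarith [sq_nonneg (t - 11/6)]

private lemma ve_le {v : ℝ} : v * Real.exp (-v) ≤ (Real.exp 1)⁻¹ := by
  have h := Real.add_one_le_exp (v - 1)
  have he : Real.exp (v - 1) = Real.exp v / Real.exp 1 := by
    rw [Real.exp_sub]
  have hv : v ≤ Real.exp v / Real.exp 1 := by linarith [he ▸ h]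
  have h1 : (0:ℝ) < Real.exp 1 := Real.exp_pos 1
  have h2 : (0:ℝ) < Real.exp (-v) := Real.exp_pos _
  have := mul_le_mul_of_nonneg_right hv h2.le
  rw [div_mul_eq_mul_div, ← Real.exp_add] at this
  simpa using this

private lemma one_sub_ge {v : ℝ} : v * Real.exp (-v) ≤ 1 - Real.exp (-v) := by
  have h := Real.add_one_le_exp v
  have h2 : (0:ℝ) < Real.exp (-v) := Real.exp_pos _
  have := mul_le_mul_of_nonneg_right h h2.le
  rw [← Real.exp_add, add_neg_cancel, Real.exp_zero] at this
  nlinarith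



private lemma g1_ub {q v : ℝ} (hq : 1 ≤ q) (hv : 0 < v) :
    v * Real.exp (-v) * (1 - Real.exp (-(2 * v))) ^ (-(1 / (2 * q))) ≤ 12/25 := by
  have hq0 : (0:ℝ) < q := lt_of_lt_of_le one_pos hq
  have hu : (0:ℝ) < Real.exp (-v) := Real.exp_pos _
  set b := 1 - Real.exp (-(2 * v)) with hbdef
  have hb0 : 0 < b := by
    have : Real.exp (-(2*v)) < 1 := Real.exp_lt_one_iff.mpr (by linarith)
    simp [hbdef]; linarith
  have hb1 : b < 1 := by
    have := Real.exp_pos (-(2*v)); simp [hbdef]; linarith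
  have hexp_le : -(1/2 : ℝ) ≤ -(1/(2*q)) := by
    have : 1/(2*q) ≤ 1/2 := by
      rw [div_le_div_iff₀ (by positivity) (by norm_num)]; nlinarith
    linarith
  have h1 : b ^ (-(1 / (2 * q))) ≤ b ^ (-(1/2) : ℝ) :=
    Real.rpow_le_rpow_of_exponent_ge hb0 hb1.le hexp_le
  have hve : 0 ≤ v * Real.exp (-v) := by positivity
  have h2 : v * Real.exp (-v) * (1 - Real.exp (-(2 * v))) ^ (-(1 / (2 * q))) ≤
      v * Real.exp (-v) * b ^ (-(1/2) : ℝ) := by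
    exact mul_le_mul_of_nonneg_left h1 hve
  refine h2.trans ?_
  set w := v * Real.exp (-v) * b ^ (-(1/2) : ℝ) with hwdef
  have hw0 : 0 ≤ w := by positivity
  have hsq : w^2 = v^2 * Real.exp (-v)^2 * b⁻¹ := by
    have : (b ^ (-(1/2) : ℝ))^2 = b⁻¹ := by
      rw [← Real.rpow_natCast (b ^ (-(1/2) : ℝ)) 2, ← Real.rpow_mul hb0.le]
      norm_num [Real.rpow_neg_one]
    rw [hwdef]; rw [mul_pow, mul_pow, this]
  have hkey := key_exp (t := 2*v) (by linarith)
  have hexp2 : Real.exp (-v)^2 = Real.exp (-(2*v)) := by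
    rw [← Real.exp_nat_mul]; ring_nf
  have hbound : v^2 * Real.exp (-v)^2 ≤ (9/40) * b := by
    rw [hexp2, hbdef]
    have he : Real.exp (-(2*v)) = (Real.exp (2*v))⁻¹ := by
      rw [← Real.exp_neg]
    have hp : (0:ℝ) < Real.exp (2*v) := Real.exp_pos _
    rw [he]
    rw [← sub_nonneg]
    have : (9/40) * (1 - (Real.exp (2*v))⁻¹) - v^2 * (Real.exp (2*v))⁻¹
        = ((9/40) * (Real.exp (2*v) - 1) - v^2) * (Real.exp (2*v))⁻¹ := by
      field_simp
    rw [this]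
    apply mul_nonneg _ (by positivity)
    nlinarith
  have hwsq : w^2 ≤ (12/25)^2 := by
    rw [hsq]
    have := mul_le_mul_of_nonneg_right hbound (inv_nonneg.mpr hb0.le)
    refine this.trans ?_
    rw [mul_inv_le_iff₀ hb0]
    nlinarith
  exact le_of_pow_le_pow_left₀ two_ne_zero (by norm_num) hwsq

private lemma g1_lb {q : ℝ} (hq : 1 ≤ q) :
    1 / Real.exp 1 < 1 * Real.exp (-1) * (1 - Real.exp (-(2 * 1))) ^ (-(1 / (2 * q))) := by
  have hq0 : (0:ℝ) < q := lt_of_lt_of_le one_pos hq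
  have hb0 : (0:ℝ) < 1 - Real.exp (-(2 * 1)) := by
    have : Real.exp (-(2*1)) < 1 := Real.exp_lt_one_iff.mpr (by norm_num)
    linarith
  have hb1 : 1 - Real.exp (-(2 * 1)) < 1 := by
    have := Real.exp_pos (-(2*(1:ℝ))); linarith
  have h1 : 1 < (1 - Real.exp (-(2 * 1))) ^ (-(1 / (2 * q)) : ℝ) := by
    rw [Real.one_lt_rpow_iff_of_pos hb0]
    right
    constructor
    · exact hb1
    · have : (0:ℝ) < 1/(2*q) := by positivity
      linarith
  have he : 1 / Real.exp 1 = Real.exp (-1) := by rw [Real.exp_neg]; simp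
  rw [he, one_mul]
  nlinarith [Real.exp_pos (-1:ℝ)]



-- facts about s = sqrt(4+u^2) for 0 < u < 1
private lemma sqrt_facts {u : ℝ} (hu : 0 < u) :
    (Real.sqrt (4 + u^2))^2 = 4 + u^2 ∧ 2 ≤ Real.sqrt (4 + u^2) ∧
      Real.sqrt (4 + u^2) < u + 2 := by
  have h0 : (0:ℝ) ≤ 4 + u^2 := by positivity
  refine ⟨Real.sq_sqrt h0, ?_, ?_⟩
  · rw [show (2:ℝ) = Real.sqrt 4 by rw [show (4:ℝ) = 2^2 by norm_num, Real.sqrt_sq]; norm_num]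
    exact Real.sqrt_le_sqrt (by nlinarith)
  · rw [show u + 2 = Real.sqrt ((u+2)^2) by rw [Real.sqrt_sq (by linarith)]]
    apply Real.sqrt_lt_sqrt h0
    nlinarith

-- rewrite of the bracket
private lemma g2_bracket {q v : ℝ} (hq : 1 ≤ q) (hv : 0 < v) :
    (Real.sqrt (4 + Real.exp (-(2 * v))) - Real.exp (-v)) ^ (1 / q)
      / ((2:ℝ) ^ (1 / q) * (1 - Real.exp (-v)) ^ (1 / (2 * q)))
    = ((Real.sqrt (4 + Real.exp (-(2 * v))) - Real.exp (-v))^2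
        / (4 * (1 - Real.exp (-v)))) ^ (1 / (2 * q)) := by
  have hq0 : (0:ℝ) < q := lt_of_lt_of_le one_pos hq
  set u := Real.exp (-v) with hudef
  have hu0 : 0 < u := Real.exp_pos _
  have hu1 : u < 1 := Real.exp_lt_one_iff.mpr (by linarith)
  have hu2 : Real.exp (-(2*v)) = u^2 := by
    rw [hudef, ← Real.exp_nat_mul]; ring_nf
  rw [hu2]
  obtain ⟨hs2, hsge, hslt⟩ := sqrt_facts hu0
  set s := Real.sqrt (4 + u^2) with hsdef
  have hA : 0 < s - u := by linarith
  have hB : 0 < 1 - u := by linarith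
  have hqe : (1:ℝ)/q = 2 * (1/(2*q)) := by field_simp
  have e1 : (s - u) ^ ((1:ℝ) / q) = ((s-u)^2) ^ ((1:ℝ)/(2*q)) := by
    rw [hqe, Real.rpow_mul hA.le, Real.rpow_two]
  have e2 : (2:ℝ) ^ ((1:ℝ) / q) = (4:ℝ) ^ ((1:ℝ)/(2*q)) := by
    rw [show (4:ℝ) = 2^(2:ℕ) by norm_num, ← Real.rpow_natCast (2:ℝ) 2,
      ← Real.rpow_mul (by norm_num : (0:ℝ) ≤ 2)]
    rw [hqe]; norm_num
  rw [e1, e2, ← Real.mul_rpow (by norm_num) hB.le, ← Real.div_rpow (by positivity) (by positivity)]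

private lemma R_gt_one {u : ℝ} (hu0 : 0 < u) (hu1 : u < 1) :
    1 < (Real.sqrt (4 + u^2) - u)^2 / (4 * (1 - u)) := by
  obtain ⟨hs2, hsge, hslt⟩ := sqrt_facts hu0
  rw [lt_div_iff₀ (by nlinarith)]
  nlinarith

private lemma g2_ub {q v : ℝ} (hq : 1 ≤ q) (hv : 0 < v) :
    v * Real.exp (-v) *
      ((Real.sqrt (4 + Real.exp (-(2 * v))) - Real.exp (-v)) ^ (1 / q)
        / ((2:ℝ) ^ (1 / q) * (1 - Real.exp (-v)) ^ (1 / (2 * q)))) ≤ 12/25 := by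
  have hq0 : (0:ℝ) < q := lt_of_lt_of_le one_pos hq
  rw [g2_bracket hq hv]
  set u := Real.exp (-v) with hudef
  have hu0 : 0 < u := Real.exp_pos _
  have hu1 : u < 1 := Real.exp_lt_one_iff.mpr (by linarith)
  have hu2 : Real.exp (-(2*v)) = u^2 := by
    rw [hudef, ← Real.exp_nat_mul]; ring_nf
  rw [hu2]
  clear_value u
  obtain ⟨hs2, hsge, hslt⟩ := sqrt_facts hu0
  have hR1' := R_gt_one hu0 hu1
  set s := Real.sqrt (4 + u^2) with hsdef
  clear_value s
  have hB : 0 < 1 - u := by linarith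
  set R := (s - u)^2 / (4 * (1 - u)) with hRdef
  clear_value R
  have hR1 : 1 ≤ R := hR1'.le
  have hR0 : 0 < R := lt_of_lt_of_le one_pos hR1
  have hee : (1:ℝ)/(2*q) ≤ 1/2 := by
    rw [div_le_div_iff₀ (by positivity) (by norm_num)]; nlinarith
  have h1 : R ^ ((1:ℝ)/(2*q)) ≤ R ^ ((1:ℝ)/2) :=
    Real.rpow_le_rpow_of_exponent_le hR1 hee
  have hvu : 0 ≤ v * u := by positivity
  have h2 : v * u * R ^ ((1:ℝ)/(2*q)) ≤ v * u * R ^ ((1:ℝ)/2) :=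
    mul_le_mul_of_nonneg_left h1 hvu
  refine h2.trans ?_
  set w := v * u * R ^ ((1:ℝ)/2) with hwdef
  clear_value w
  have hw0 : 0 ≤ w := by rw [hwdef]; positivity
  have hsq : w^2 = v^2 * u^2 * R := by
    have : (R ^ ((1:ℝ)/2))^2 = R := by
      rw [← Real.rpow_natCast (R ^ ((1:ℝ)/2)) 2, ← Real.rpow_mul hR0.le]
      norm_num
    rw [hwdef, mul_pow, mul_pow, this]
  -- bound w^2
  have hA2 : (s - u)^2 ≤ 4 * (1-u) + 2 * u^2 := by nlinarith
  have hstep : v^2 * u^2 * R ≤ v^2 * u^2 + v^2 * u^4 / (2 * (1-u)) := by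
    rw [hRdef]
    have hfrac : (s-u)^2/(4*(1-u)) ≤ (4*(1-u)+2*u^2)/(4*(1-u)) :=
      div_le_div_of_nonneg_right hA2 (by positivity)
    have heq : v^2 * u^2 * ((4*(1-u)+2*u^2)/(4*(1-u))) = v^2 * u^2 + v^2 * u^4 / (2*(1-u)) := by
      field_simp
      ring
    calc v^2 * u^2 * ((s - u)^2 / (4 * (1 - u)))
        ≤ v^2 * u^2 * ((4*(1-u)+2*u^2)/(4*(1-u))) :=
          mul_le_mul_of_nonneg_left hfrac (by positivity)
      _ = _ := heq
  have hb1 : v * u ≤ (Real.exp 1)⁻¹ := by rw [hudef]; exact ve_le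
  have hb2 : v * u^3 ≤ (Real.exp 1)⁻¹ / 3 := by
    have h3 := ve_le (v := 3*v)
    have : u^3 = Real.exp (-(3*v)) := by
      rw [hudef, ← Real.exp_nat_mul]; ring_nf
    rw [this]
    nlinarith [Real.exp_pos (-(3*v))]
  have hb3 : v^2 * u^4 / (2 * (1-u)) ≤ v * u^3 / 2 := by
    have hBu : v * u ≤ 1 - u := by rw [hudef]; exact one_sub_ge
    rw [div_le_div_iff₀ (by positivity) (by norm_num)]
    nlinarith [mul_pos hv hu0, pow_pos hu0 3, mul_pos (mul_pos hv hv) (pow_pos hu0 4)]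
  have he : (2.7182818283:ℝ) < Real.exp 1 := Real.exp_one_gt_d9
  have hwsq : w^2 ≤ (12/25)^2 := by
    rw [hsq]
    have hc0 : (0:ℝ) ≤ (Real.exp 1)⁻¹ := by positivity
    have hinv : (Real.exp 1)⁻¹ ≤ (2.7182818283:ℝ)⁻¹ :=
      inv_anti₀ (by norm_num) he.le
    have step2 : v^2*u^2 + v^2 * u^4 / (2*(1-u)) ≤ (Real.exp 1)⁻¹^2 + (Real.exp 1)⁻¹/6 := by
      have h1 : v^2*u^2 ≤ (Real.exp 1)⁻¹^2 := by
        calc v^2*u^2 = (v*u)*(v*u) := by ring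
          _ ≤ (Real.exp 1)⁻¹ * (Real.exp 1)⁻¹ := mul_le_mul hb1 hb1 hvu hc0
          _ = (Real.exp 1)⁻¹^2 := by ring
      have h2 : v * u^3 / 2 ≤ (Real.exp 1)⁻¹/6 := by linarith [hb2]
      linarith [hb3]
    have hsq' : (Real.exp 1)⁻¹^2 ≤ ((2.7182818283:ℝ)⁻¹)^2 := pow_le_pow_left₀ hc0 hinv 2
    have step3 : (Real.exp 1)⁻¹^2 + (Real.exp 1)⁻¹/6 ≤ (12/25)^2 := by
      have hnum : ((2.7182818283:ℝ)⁻¹)^2 + (2.7182818283:ℝ)⁻¹/6 ≤ (12/25)^2 := by norm_num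
      linarith [hsq', hinv]
    linarith [hstep]
  exact le_of_pow_le_pow_left₀ two_ne_zero (by norm_num) hwsq

private lemma g2_lb {q : ℝ} (hq : 1 ≤ q) :
    1 / Real.exp 1 < 1 * Real.exp (-1) *
      ((Real.sqrt (4 + Real.exp (-(2 * 1))) - Real.exp (-1)) ^ (1 / q)
        / ((2:ℝ) ^ (1 / q) * (1 - Real.exp (-1)) ^ (1 / (2 * q)))) := by
  have hq0 : (0:ℝ) < q := lt_of_lt_of_le one_pos hq
  have h1 : Real.exp (-(1:ℝ)) = Real.exp (-(1:ℝ)) := rfl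
  have := g2_bracket (v := 1) hq one_pos
  rw [this]
  have hu0 : (0:ℝ) < Real.exp (-1) := Real.exp_pos _
  have hu1 : Real.exp (-1:ℝ) < 1 := Real.exp_lt_one_iff.mpr (by norm_num)
  have hu2 : Real.exp (-(2*1):ℝ) = Real.exp (-1:ℝ)^2 := by
    rw [← Real.exp_nat_mul]; ring_nf
  have hR := R_gt_one hu0 hu1
  rw [← hu2] at hR
  have hR0 : (0:ℝ) < (Real.sqrt (4 + Real.exp (-(2*1))) - Real.exp (-1))^2
      / (4 * (1 - Real.exp (-1))) := lt_trans one_pos hR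
  have hrp : 1 < ((Real.sqrt (4 + Real.exp (-(2*1))) - Real.exp (-1))^2
      / (4 * (1 - Real.exp (-1)))) ^ ((1:ℝ)/(2*q)) := by
    rw [Real.one_lt_rpow_iff_of_pos hR0]
    exact Or.inl ⟨hR, by positivity⟩
  have he : 1 / Real.exp 1 = Real.exp (-1) := by rw [Real.exp_neg]; simp
  rw [he, one_mul]
  nlinarith [Real.exp_pos (-1:ℝ)]

/-- For `q ≥ 1`, the suprema over `v > 0` of
`g₁(v) := v e^{−v} (1 − e^{−2v})^{−1/(2q)}` and
`g₂(v) := v e^{−v} (√(4 + e^{−2v}) − e^{−v})^{1/q} / (2^{1/q}(1 − e^{−v})^{1/(2q)})`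
both lie in the open interval `(1/e, 1/2)`. -/
theorem stmt_18 (q : ℝ) (hq : 1 ≤ q) :
    (∃ s : ℝ, IsLUB ((fun v : ℝ =>
        v * Real.exp (-v) * (1 - Real.exp (-(2 * v))) ^ (-(1 / (2 * q)))) '' Set.Ioi 0) s ∧
      1 / Real.exp 1 < s ∧ s < 1 / 2) ∧
    (∃ s : ℝ, IsLUB ((fun v : ℝ => v * Real.exp (-v) *
        ((Real.sqrt (4 + Real.exp (-(2 * v))) - Real.exp (-v)) ^ (1 / q)
          / ((2:ℝ) ^ (1 / q) * (1 - Real.exp (-v)) ^ (1 / (2 * q))))) '' Set.Ioi 0) s ∧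
      1 / Real.exp 1 < s ∧ s < 1 / 2) := by
  constructor
  · set f := fun v : ℝ =>
      v * Real.exp (-v) * (1 - Real.exp (-(2 * v))) ^ (-(1 / (2 * q))) with hf
    have hmem : f 1 ∈ f '' Set.Ioi 0 := ⟨1, by norm_num, rfl⟩
    have hne : (f '' Set.Ioi 0).Nonempty := ⟨f 1, hmem⟩
    have hbdd : (12/25 : ℝ) ∈ upperBounds (f '' Set.Ioi 0) := by
      rintro x ⟨v, hv, rfl⟩
      exact g1_ub hq hv
    refine ⟨sSup (f '' Set.Ioi 0), isLUB_csSup hne ⟨12/25, hbdd⟩, ?_, ?_⟩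
    · have h1 := le_csSup ⟨12/25, hbdd⟩ hmem
      have h2 : 1 / Real.exp 1 < f 1 := g1_lb hq
      linarith
    · have := csSup_le hne hbdd
      linarith
  · set f := fun v : ℝ => v * Real.exp (-v) *
      ((Real.sqrt (4 + Real.exp (-(2 * v))) - Real.exp (-v)) ^ (1 / q)
        / ((2:ℝ) ^ (1 / q) * (1 - Real.exp (-v)) ^ (1 / (2 * q)))) with hf
    have hmem : f 1 ∈ f '' Set.Ioi 0 := ⟨1, by norm_num, rfl⟩
    have hne : (f '' Set.Ioi 0).Nonempty := ⟨f 1, hmem⟩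
    have hbdd : (12/25 : ℝ) ∈ upperBounds (f '' Set.Ioi 0) := by
      rintro x ⟨v, hv, rfl⟩
      exact g2_ub hq hv
    refine ⟨sSup (f '' Set.Ioi 0), isLUB_csSup hne ⟨12/25, hbdd⟩, ?_, ?_⟩
    · have h1 := le_csSup ⟨12/25, hbdd⟩ hmem
      have h2 : 1 / Real.exp 1 < f 1 := g2_lb hq
      linarith
    · have := csSup_le hne hbdd
      linarith
end

section
/- Let q ≥ 1. Then the functions u ↦ u · (1 − u²)^{−1/(2q)} and u ↦ u · (√(4 + u²) − u)^{1/q} / (2^{1/q} (1 − u)^{1/(2q)}) are increasing on the interval (0,1). -/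
private theorem key_ineq19 (a b x y : ℝ) (hab : a < b)
    (hpy : 0 < y) (hyx : y < x) (hx1 : x < 1)
    (ra : a*x = 1 - x^2) (rb : b*y = 1 - y^2) :
    x^2*(1-b) < y^2*(1-a) := by
  have hpx : 0 < x := hpy.trans hyx
  have hy1 : y < 1 := hyx.trans hx1
  have e1 : 1 - a = (x^2+x-1)/x := by field_simp; nlinarith [ra]
  have e2 : 1 - b = (y^2+y-1)/y := by field_simp; nlinarith [rb]
  rw [e1, e2, ← mul_div_assoc, ← mul_div_assoc, div_lt_div_iff₀ hpy hpx]
  have hxy1 : x*y < 1 := by nlinarith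
  nlinarith [mul_pos (mul_pos (mul_pos (sub_pos.2 hyx) hpx) hpy) (sub_pos.2 hxy1),
    mul_pos (mul_pos (sub_pos.2 hyx) (mul_pos hpx hpx)) (sub_pos.2 hy1),
    mul_pos (mul_pos (sub_pos.2 hyx) (mul_pos hpy hpy)) (sub_pos.2 hx1)]

private theorem h_facts19 (u : ℝ) (hu0 : 0 < u) (hu1 : u < 1) :
    0 < (Real.sqrt (4+u^2) - u)/2 ∧
    u * ((Real.sqrt (4+u^2) - u)/2) = 1 - ((Real.sqrt (4+u^2) - u)/2)^2 ∧
    (Real.sqrt (4+u^2) - u)/2 < 1 := by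
  have hs2 : Real.sqrt (4+u^2) ^ 2 = 4 + u^2 := Real.sq_sqrt (by positivity)
  have hs0 : 0 ≤ Real.sqrt (4+u^2) := Real.sqrt_nonneg _
  have hsu : u < Real.sqrt (4+u^2) := by nlinarith
  have hpos : 0 < (Real.sqrt (4+u^2) - u)/2 := by linarith
  have hrel : u * ((Real.sqrt (4+u^2) - u)/2) = 1 - ((Real.sqrt (4+u^2) - u)/2)^2 := by
    linear_combination hs2 / 4
  exact ⟨hpos, hrel, by nlinarith⟩

private theorem rw19 (q u : ℝ) (hq : 1 ≤ q) (hu0 : 0 < u) (hu1 : u < 1) :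
    (Real.sqrt (4 + u ^ 2) - u) ^ (1 / q)
      / ((2:ℝ) ^ (1 / q) * (1 - u) ^ (1 / (2 * q)))
    = (((Real.sqrt (4+u^2) - u)/2)^2 / (1-u)) ^ (1/(2*q)) := by
  obtain ⟨hpos, -, -⟩ := h_facts19 u hu0 hu1
  have hq0 : (0:ℝ) < q := lt_of_lt_of_le one_pos hq
  set x := (Real.sqrt (4+u^2) - u)/2 with hx
  have h1u : (0:ℝ) < 1 - u := by linarith
  have hsplit : Real.sqrt (4+u^2) - u = 2 * x := by rw [hx]; ring
  rw [hsplit, Real.mul_rpow (by norm_num) hpos.le, Real.div_rpow (by positivity) h1u.le]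
  have hx2 : x ^ 2 = x ^ ((2:ℕ):ℝ) := (Real.rpow_natCast x 2).symm
  have : (x^2 : ℝ) ^ (1/(2*q)) = x ^ (1/q) := by
    rw [hx2, ← Real.rpow_mul hpos.le]
    congr 1
    push_cast
    field_simp
  rw [this]
  field_simp

/-- For `q ≥ 1`, the functions `u ↦ u (1 − u²)^{−1/(2q)}` and
`u ↦ u (√(4 + u²) − u)^{1/q} / (2^{1/q}(1 − u)^{1/(2q)})` are increasing on `(0,1)`. -/
theorem stmt_19 (q : ℝ) (hq : 1 ≤ q) :
    StrictMonoOn (fun u : ℝ => u * (1 - u ^ 2) ^ (-(1 / (2 * q)))) (Set.Ioo 0 1) ∧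
    StrictMonoOn (fun u : ℝ => u * ((Real.sqrt (4 + u ^ 2) - u) ^ (1 / q)
      / ((2:ℝ) ^ (1 / q) * (1 - u) ^ (1 / (2 * q))))) (Set.Ioo 0 1) := by
  have hq0 : (0:ℝ) < q := lt_of_lt_of_le one_pos hq
  have he : (0:ℝ) < 1/(2*q) := by positivity
  constructor
  · intro a ha b hb hab
    obtain ⟨ha0, ha1⟩ := ha
    obtain ⟨hb0, hb1⟩ := hb
    have h1a : (0:ℝ) < 1 - a^2 := by nlinarith
    have h1b : (0:ℝ) < 1 - b^2 := by nlinarith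
    simp only
    rw [Real.rpow_neg h1a.le, Real.rpow_neg h1b.le]
    have hlt : (1 - b^2) ^ (1/(2*q)) < (1 - a^2) ^ (1/(2*q)) :=
      Real.rpow_lt_rpow h1b.le (by nlinarith) he
    have hpb : (0:ℝ) < (1 - b^2) ^ (1/(2*q)) := Real.rpow_pos_of_pos h1b _
    exact mul_lt_mul'' hab ((inv_lt_inv₀ (by positivity) hpb).2 hlt) ha0.le (by positivity)
  · intro a ha b hb hab
    obtain ⟨ha0, ha1⟩ := ha
    obtain ⟨hb0, hb1⟩ := hb
    obtain ⟨hxa0, rxa, hxa1⟩ := h_facts19 a ha0 ha1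
    obtain ⟨hxb0, rxb, hxb1⟩ := h_facts19 b hb0 hb1
    set x := (Real.sqrt (4+a^2) - a)/2 with hxdef
    set y := (Real.sqrt (4+b^2) - b)/2 with hydef
    simp only
    rw [rw19 q a hq ha0 ha1, rw19 q b hq hb0 hb1]
    have h1a : (0:ℝ) < 1 - a := by linarith
    have h1b : (0:ℝ) < 1 - b := by linarith
    -- y < x
    have hyx : y < x := by nlinarith [mul_pos hxa0 hxb0]
    have hkey : x^2*(1-b) < y^2*(1-a) := key_ineq19 a b x y hab hxb0 hyx hxa1 rxa rxb
    have hphi : x^2/(1-a) < y^2/(1-b) := (div_lt_div_iff₀ h1a h1b).2 (by linarith [hkey])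
    have hphia : (0:ℝ) < x^2/(1-a) := by positivity
    exact mul_lt_mul'' hab (Real.rpow_lt_rpow hphia.le hphi he) ha0.le
      (Real.rpow_pos_of_pos hphia _).le
end
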